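/- arXiv:2203.03070 — 4 statements merged into one kernel-verified Lean document; each statement's English description precedes it below -/
import Mathlib

section
/- Linearity of QDQs: if Λ_F is a QDQ of F at (x̄, ȳ_F) in the direction of Γ_F and Λ_G is a QDQ of G at (x̄, ȳ_G) in the direction of Γ_G, then for any scalars α, β ∈ ℝ, the set αΛ_F + βΛ_G is a QDQ of the set-valued map x ⇝ αF(x) + βG(x) at (x̄, αȳ_F + βȳ_G) in the direction of Γ_F ∩ Γ_G. -/
open Filter Topology Metric
open scoped ENNReal NNReal

/-- A pseudo-modulus: monotone nondecreasing on ℝ₊, with value 0 at 0 and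
right-limit 0 at 0 (values in `ℝ≥0∞`, i.e. ℝ₊ ∪ {+∞}). -/
def IsPseudoModulus (ρ : ℝ → ℝ≥0∞) : Prop :=
  (∀ ⦃s t : ℝ⦄, 0 ≤ s → s ≤ t → ρ s ≤ ρ t) ∧ ρ 0 = 0 ∧
    Tendsto ρ (𝓝[>] (0 : ℝ)) (𝓝 0)

/-- `Λ` is a Quasi Differential Quotient (QDQ) of the set-valued map `Fm` at
`(x₀, y₀)` in the direction of `Γ`. -/
def IsQDQ {E F : Type*} [NormedAddCommGroup E] [NormedSpace ℝ E]
    [NormedAddCommGroup F] [NormedSpace ℝ F]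
    (Λ : Set (E →L[ℝ] F)) (Fm : E → Set F) (x₀ : E) (y₀ : F) (Γ : Set E) : Prop :=
  IsCompact Λ ∧ ∃ ρ : ℝ → ℝ≥0∞, IsPseudoModulus ρ ∧
    ∀ δ : ℝ, 0 < δ → ρ δ < ⊤ →
      ∃ (L : E → (E →L[ℝ] F)) (h : E → F),
        ContinuousOn (fun x => (L x, h x)) (closedBall x₀ δ ∩ Γ) ∧
        ∀ x ∈ closedBall x₀ δ ∩ Γ,
          infDist (L x) Λ ≤ (ρ δ).toReal ∧
          ‖h x‖ ≤ δ * (ρ δ).toReal ∧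
          y₀ + L x (x - x₀) + h x ∈ Fm x

/-!
The approximating pairs of `F` and `G` at scale `δ` combine linearly into an approximating pair
of `αF + βG`, with error at most `|α| ρ_F(δ) + |β| ρ_G(δ)`. The modulus
`(|α| + |β| + 1)(ρ_F + ρ_G)` dominates this error, and the extra `1` makes it infinite as soon
as `ρ_F(δ)` or `ρ_G(δ)` is, even when `α` or `β` vanishes.
-/

namespace IsPseudoModulus

variable {ρ σ : ℝ → ℝ≥0∞}

theorem add (hρ : IsPseudoModulus ρ) (hσ : IsPseudoModulus σ) :
    IsPseudoModulus fun δ => ρ δ + σ δ := by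
  obtain ⟨hρ_mono, hρ_zero, hρ_lim⟩ := hρ
  obtain ⟨hσ_mono, hσ_zero, hσ_lim⟩ := hσ
  refine ⟨fun s t hs hst => add_le_add (hρ_mono hs hst) (hσ_mono hs hst), ?_, ?_⟩
  · simp [hρ_zero, hσ_zero]
  · simpa using hρ_lim.add hσ_lim

theorem const_mul (hρ : IsPseudoModulus ρ) {c : ℝ≥0∞} (hc : c ≠ ⊤) :
    IsPseudoModulus fun δ => c * ρ δ := by
  obtain ⟨hρ_mono, hρ_zero, hρ_lim⟩ := hρ
  refine ⟨fun s t hs hst => mul_le_mul_right (hρ_mono hs hst) c, by simp [hρ_zero], ?_⟩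
  simpa using ENNReal.Tendsto.const_mul hρ_lim (Or.inr hc)

end IsPseudoModulus

section LinComb

variable {X : Type*} [NormedAddCommGroup X] [NormedSpace ℝ X]

def Set.linComb (α β : ℝ) (s t : Set X) : Set X :=
  {v | ∃ x ∈ s, ∃ y ∈ t, v = α • x + β • y}

theorem Set.linComb_eq_image_prod (α β : ℝ) (s t : Set X) :
    Set.linComb α β s t = (fun p : X × X => α • p.1 + β • p.2) '' s ×ˢ t := by
  ext v
  simp only [Set.linComb, Set.mem_ofPred_eq, Set.mem_image, Set.mem_prod, Prod.exists]
  constructor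
  · rintro ⟨x, hx, y, hy, rfl⟩
    exact ⟨x, y, ⟨hx, hy⟩, rfl⟩
  · rintro ⟨x, y, ⟨hx, hy⟩, rfl⟩
    exact ⟨x, hx, y, hy, rfl⟩

theorem IsCompact.linComb {s t : Set X} (hs : IsCompact s) (ht : IsCompact t) (α β : ℝ) :
    IsCompact (Set.linComb α β s t) := by
  rw [Set.linComb_eq_image_prod]
  exact (hs.prod ht).image ((continuous_fst.const_smul α).add (continuous_snd.const_smul β))

theorem infDist_linComb_le {s t : Set X} (hs : IsCompact s) (ht : IsCompact t)
    (α β : ℝ) (x y : X) :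
    infDist (α • x + β • y) (Set.linComb α β s t) ≤ |α| * infDist x s + |β| * infDist y t := by
  rcases s.eq_empty_or_nonempty with rfl | hs_ne
  · simpa [Set.linComb] using mul_nonneg (abs_nonneg β) (infDist_nonneg (x := y) (s := t))
  rcases t.eq_empty_or_nonempty with rfl | ht_ne
  · simpa [Set.linComb] using mul_nonneg (abs_nonneg α) (infDist_nonneg (x := x) (s := s))
  obtain ⟨x', hx', hx_dist⟩ := hs.exists_infDist_eq_dist hs_ne x
  obtain ⟨y', hy', hy_dist⟩ := ht.exists_infDist_eq_dist ht_ne y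
  calc infDist (α • x + β • y) (Set.linComb α β s t)
      ≤ dist (α • x + β • y) (α • x' + β • y') :=
        infDist_le_dist_of_mem ⟨x', hx', y', hy', rfl⟩
    _ ≤ dist (α • x) (α • x') + dist (β • y) (β • y') := dist_add_add_le _ _ _ _
    _ = |α| * infDist x s + |β| * infDist y t := by
        rw [dist_smul₀, dist_smul₀, Real.norm_eq_abs, Real.norm_eq_abs, hx_dist, hy_dist]

end LinComb

section Approximation

variable {E F : Type*} [NormedAddCommGroup E] [NormedSpace ℝ E]
  [NormedAddCommGroup F] [NormedSpace ℝ F]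

/-- The scale-`δ` clause of `IsQDQ`, with `r` in place of `(ρ δ).toReal`. -/
def IsQDQApprox (Λ : Set (E →L[ℝ] F)) (Fm : E → Set F) (x₀ : E) (y₀ : F) (Γ : Set E)
    (δ r : ℝ) : Prop :=
  ∃ (L : E → (E →L[ℝ] F)) (h : E → F),
    ContinuousOn (fun x => (L x, h x)) (closedBall x₀ δ ∩ Γ) ∧
    ∀ x ∈ closedBall x₀ δ ∩ Γ,
      infDist (L x) Λ ≤ r ∧ ‖h x‖ ≤ δ * r ∧ y₀ + L x (x - x₀) + h x ∈ Fm x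

variable {Λ ΛF ΛG : Set (E →L[ℝ] F)} {Fm Gm : E → Set F} {x₀ : E} {y₀ yF yG : F}
  {Γ ΓF ΓG : Set E} {δ r s : ℝ}

theorem IsQDQApprox.mono (hr : IsQDQApprox Λ Fm x₀ y₀ Γ δ r) (hδ : 0 ≤ δ) (hrs : r ≤ s) :
    IsQDQApprox Λ Fm x₀ y₀ Γ δ s := by
  obtain ⟨L, h, hcont, hprop⟩ := hr
  refine ⟨L, h, hcont, fun x hx => ?_⟩
  obtain ⟨hL, hh, hmem⟩ := hprop x hx
  exact ⟨hL.trans hrs, hh.trans (mul_le_mul_of_nonneg_left hrs hδ), hmem⟩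

theorem IsQDQApprox.linComb (hΛF : IsCompact ΛF) (hΛG : IsCompact ΛG)
    (hF : IsQDQApprox ΛF Fm x₀ yF ΓF δ r) (hG : IsQDQApprox ΛG Gm x₀ yG ΓG δ s) (α β : ℝ) :
    IsQDQApprox (Set.linComb α β ΛF ΛG) (fun x => Set.linComb α β (Fm x) (Gm x)) x₀
      (α • yF + β • yG) (ΓF ∩ ΓG) δ (|α| * r + |β| * s) := by
  obtain ⟨LF, eF, hF_cont, hF_prop⟩ := hF
  obtain ⟨LG, eG, hG_cont, hG_prop⟩ := hG
  have hF_cont' : ContinuousOn _ (closedBall x₀ δ ∩ (ΓF ∩ ΓG)) :=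
    hF_cont.mono (Set.inter_subset_inter_right _ Set.inter_subset_left)
  have hG_cont' : ContinuousOn _ (closedBall x₀ δ ∩ (ΓF ∩ ΓG)) :=
    hG_cont.mono (Set.inter_subset_inter_right _ Set.inter_subset_right)
  refine ⟨fun x => α • LF x + β • LG x, fun x => α • eF x + β • eG x, ?_, fun x hx => ?_⟩
  · exact (((continuous_fst.comp_continuousOn hF_cont').const_smul α).add
        ((continuous_fst.comp_continuousOn hG_cont').const_smul β)).prodMk
      (((continuous_snd.comp_continuousOn hF_cont').const_smul α).add
        ((continuous_snd.comp_continuousOn hG_cont').const_smul β))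
  obtain ⟨hLF, hhF, hmemF⟩ := hF_prop x ⟨hx.1, hx.2.1⟩
  obtain ⟨hLG, hhG, hmemG⟩ := hG_prop x ⟨hx.1, hx.2.2⟩
  refine ⟨?_, ?_, ⟨_, hmemF, _, hmemG, ?_⟩⟩
  · calc infDist (α • LF x + β • LG x) (Set.linComb α β ΛF ΛG)
        ≤ |α| * infDist (LF x) ΛF + |β| * infDist (LG x) ΛG :=
          infDist_linComb_le hΛF hΛG α β _ _
      _ ≤ |α| * r + |β| * s := by gcongr
  · calc ‖α • eF x + β • eG x‖ ≤ |α| * ‖eF x‖ + |β| * ‖eG x‖ := by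
          simpa only [norm_smul, Real.norm_eq_abs] using norm_add_le (α • eF x) (β • eG x)
      _ ≤ |α| * (δ * r) + |β| * (δ * s) := by gcongr
      _ = δ * (|α| * r + |β| * s) := by ring
  · simp only [add_apply, smul_apply]
    module

theorem IsQDQ.linComb (hF : IsQDQ ΛF Fm x₀ yF ΓF) (hG : IsQDQ ΛG Gm x₀ yG ΓG) (α β : ℝ) :
    IsQDQ (Set.linComb α β ΛF ΛG) (fun x => Set.linComb α β (Fm x) (Gm x)) x₀ (α • yF + β • yG)
      (ΓF ∩ ΓG) := by
  obtain ⟨hΛF, ρF, hρF, hF_approx⟩ := hF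
  obtain ⟨hΛG, ρG, hρG, hG_approx⟩ := hG
  set c : ℝ≥0 := ‖α‖₊ + ‖β‖₊ + 1
  refine ⟨hΛF.linComb hΛG α β, fun δ => c * (ρF δ + ρG δ),
    (hρF.add hρG).const_mul ENNReal.coe_ne_top, fun δ hδ hρ_fin => ?_⟩
  have hsum_fin : ρF δ + ρG δ < ⊤ :=
    (le_mul_of_one_le_left' (by simp [c])).trans_lt hρ_fin
  have hρF_fin : ρF δ < ⊤ := le_self_add.trans_lt hsum_fin
  have hρG_fin : ρG δ < ⊤ := le_add_self.trans_lt hsum_fin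
  refine (IsQDQApprox.linComb hΛF hΛG (hF_approx δ hδ hρF_fin) (hG_approx δ hδ hρG_fin) α β).mono
    hδ.le ?_
  have hρF_nonneg : 0 ≤ (ρF δ).toReal := ENNReal.toReal_nonneg
  have hρG_nonneg : 0 ≤ (ρG δ).toReal := ENNReal.toReal_nonneg
  rw [ENNReal.toReal_mul, ENNReal.toReal_add hρF_fin.ne hρG_fin.ne, ENNReal.coe_toReal]
  simp only [c, NNReal.coe_add, coe_nnnorm, Real.norm_eq_abs, NNReal.coe_one]
  nlinarith [abs_nonneg α, abs_nonneg β]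

end Approximation

theorem isQDQ_linearity {N n : ℕ}
    {F G : EuclideanSpace ℝ (Fin N) → Set (EuclideanSpace ℝ (Fin n))}
    {ΓF ΓG : Set (EuclideanSpace ℝ (Fin N))} {x₀ : EuclideanSpace ℝ (Fin N)}
    {yF yG : EuclideanSpace ℝ (Fin n)}
    {ΛF ΛG : Set (EuclideanSpace ℝ (Fin N) →L[ℝ] EuclideanSpace ℝ (Fin n))}
    (hF : IsQDQ ΛF F x₀ yF ΓF) (hG : IsQDQ ΛG G x₀ yG ΓG) (α β : ℝ) :
    IsQDQ {T | ∃ L ∈ ΛF, ∃ M ∈ ΛG, T = α • L + β • M}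
      (fun x => {v | ∃ y ∈ F x, ∃ z ∈ G x, v = α • y + β • z})
      x₀ (α • yF + β • yG) (ΓF ∩ ΓG) :=
  hF.linComb hG α β
end

section
/- Sufficient criterion for QDQ: let F : ℝᴺ → ℝⁿ be continuous, Γ ⊆ ℝᴺ, x̄ ∈ Γ, and Λ ⊆ Lin(ℝᴺ, ℝⁿ) compact. If there exist ε̃ > 0 and a continuous map L : (x̄ + B_{ε̃}) ∩ Γ → Lin(ℝᴺ, ℝⁿ) such that dist(L(x), Λ) → 0 and |F(x) − F(x̄) − L(x)·(x − x̄)| / |x − x̄| → 0 as x → x̄ within Γ, then Λ is a QDQ of F at (x̄, F(x̄)) in the direction of Γ. -/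
open Filter Topology Metric
open scoped ENNReal NNReal

/-!
Take the given `L` itself and the remainder `h x = F x - F x₀ - L x (x - x₀)` as the maps
required for every `δ`, and let `ρ δ` be the supremum over `closedBall x₀ δ ∩ Γ` of the larger
of the two errors `infDist (L x) Λ` and `‖h x‖ / ‖x - x₀‖`. Both errors tend to `0` at `x₀`
within `Γ`, so this supremum is a pseudo-modulus, and `‖h x‖ ≤ ‖x - x₀‖ ρ δ ≤ δ ρ δ`.
-/

section SupModulus

variable {X : Type*} [MetricSpace X] {φ : X → ℝ≥0∞} {s : Set X} {x₀ : X} {ε δ : ℝ}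

/-- Beyond `ε` the value is `⊤`: `IsQDQ` imposes nothing at such radii. -/
noncomputable def supModulus (φ : X → ℝ≥0∞) (s : Set X) (x₀ : X) (ε δ : ℝ) : ℝ≥0∞ :=
  if δ ≤ ε then ⨆ x ∈ closedBall x₀ δ ∩ s, φ x else ⊤

theorem supModulus_mono : Monotone (supModulus φ s x₀ ε) := by
  intro δ δ' hδ
  by_cases hδ' : δ' ≤ ε
  · simp only [supModulus, if_pos (hδ.trans hδ'), if_pos hδ']
    exact biSup_mono fun x hx => ⟨closedBall_subset_closedBall hδ hx.1, hx.2⟩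
  · simp [supModulus, hδ']

theorem le_supModulus (hδ : δ ≤ ε) {x : X} (hx : x ∈ closedBall x₀ δ ∩ s) :
    φ x ≤ supModulus φ s x₀ ε δ := by
  simp only [supModulus, if_pos hδ]
  exact le_iSup₂ (f := fun x (_ : x ∈ closedBall x₀ δ ∩ s) => φ x) x hx

theorem le_of_supModulus_lt_top (h : supModulus φ s x₀ ε δ < ⊤) : δ ≤ ε := by
  by_contra hδ
  simp [supModulus, hδ] at h

theorem supModulus_zero (hφ : Tendsto φ (𝓝[s] x₀) (𝓝 0)) (hε : 0 ≤ ε) :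
    supModulus φ s x₀ ε 0 = 0 := by
  simp only [supModulus, if_pos hε, closedBall_zero]
  refine le_antisymm (iSup₂_le fun x hx => ?_) bot_le
  obtain ⟨rfl, hxs⟩ := hx
  exact (tendsto_nhds_unique (tendsto_pure_nhds φ x) (hφ.mono_left (pure_le_nhdsWithin hxs))).le

theorem tendsto_supModulus (hφ : Tendsto φ (𝓝[s] x₀) (𝓝 0)) (hε : 0 < ε) :
    Tendsto (supModulus φ s x₀ ε) (𝓝[>] 0) (𝓝 0) := by
  refine ENNReal.tendsto_nhds_zero.2 fun c hc => ?_
  obtain ⟨r, hr, hball⟩ :=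
    Metric.mem_nhdsWithin_iff.1 (ENNReal.tendsto_nhds_zero.1 hφ c hc)
  filter_upwards [Ioo_mem_nhdsGT (lt_min hε hr)] with δ hδ
  simp only [supModulus, if_pos (hδ.2.le.trans (min_le_left _ _))]
  refine iSup₂_le fun x hx => hball ⟨?_, hx.2⟩
  exact (mem_closedBall.1 hx.1).trans_lt (hδ.2.trans_le (min_le_right _ _))

theorem isPseudoModulus_supModulus (hφ : Tendsto φ (𝓝[s] x₀) (𝓝 0)) (hε : 0 < ε) :
    IsPseudoModulus (supModulus φ s x₀ ε) :=
  ⟨fun _ _ _ hst => supModulus_mono hst, supModulus_zero hφ hε.le, tendsto_supModulus hφ hε⟩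

end SupModulus

theorem isQDQ_criterion_general {N n : ℕ}
    {F : EuclideanSpace ℝ (Fin N) → EuclideanSpace ℝ (Fin n)}
    (hF : Continuous F)
    {Γ : Set (EuclideanSpace ℝ (Fin N))} {x₀ : EuclideanSpace ℝ (Fin N)}
    {Λ : Set (EuclideanSpace ℝ (Fin N) →L[ℝ] EuclideanSpace ℝ (Fin n))}
    (hΛ : IsCompact Λ) {ε : ℝ} (hε : 0 < ε)
    {L : EuclideanSpace ℝ (Fin N) → (EuclideanSpace ℝ (Fin N) →L[ℝ] EuclideanSpace ℝ (Fin n))}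
    (hLcont : ContinuousOn L (closedBall x₀ ε ∩ Γ))
    (hdist : Tendsto (fun x => infDist (L x) Λ) (𝓝[Γ] x₀) (𝓝 0))
    (happrox : Tendsto (fun x => ‖F x - F x₀ - L x (x - x₀)‖ / ‖x - x₀‖)
      (𝓝[Γ \ {x₀}] x₀) (𝓝 0)) :
    IsQDQ Λ (fun x => {F x}) x₀ (F x₀) Γ := by
  set h := fun x => F x - F x₀ - L x (x - x₀)
  set φ := fun x => ENNReal.ofReal (max (infDist (L x) Λ) (‖h x‖ / ‖x - x₀‖))
  -- at `x₀` the quotient is `0 / 0 = 0`, so the punctured limit extends to `𝓝[Γ] x₀`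
  have hquot : Tendsto (fun x => ‖h x‖ / ‖x - x₀‖) (𝓝[Γ] x₀) (𝓝 0) := by
    have hcont : ContinuousWithinAt (fun x => ‖h x‖ / ‖x - x₀‖) (Γ \ {x₀}) x₀ := by
      simpa only [ContinuousWithinAt, h, sub_self, map_zero, norm_zero, div_zero] using happrox
    simpa only [ContinuousWithinAt, h, sub_self, map_zero, norm_zero, div_zero] using
      continuousWithinAt_sdiff_self.1 hcont
  have hφ : Tendsto φ (𝓝[Γ] x₀) (𝓝 0) := by
    simpa only [max_self, ENNReal.ofReal_zero] using ENNReal.tendsto_ofReal (hdist.max hquot)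
  refine ⟨hΛ, supModulus φ Γ x₀ ε, isPseudoModulus_supModulus hφ hε,
    fun δ hδ hρ => ⟨L, h, ?_, fun x hx => ?_⟩⟩
  · have hsub : closedBall x₀ δ ∩ Γ ⊆ closedBall x₀ ε ∩ Γ :=
      Set.inter_subset_inter_left Γ (closedBall_subset_closedBall (le_of_supModulus_lt_top hρ))
    have hL := hLcont.mono hsub
    exact hL.prodMk ((hF.continuousOn.sub continuousOn_const).sub
      (hL.clm_apply (continuousOn_id.sub continuousOn_const)))
  · have hφx : max (infDist (L x) Λ) (‖h x‖ / ‖x - x₀‖) ≤ (supModulus φ Γ x₀ ε δ).toReal :=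
      (ENNReal.ofReal_le_iff_le_toReal hρ.ne).1 (le_supModulus (le_of_supModulus_lt_top hρ) hx)
    refine ⟨(le_max_left _ _).trans hφx, ?_, by simp [h]⟩
    calc ‖h x‖ = ‖h x‖ / ‖x - x₀‖ * ‖x - x₀‖ :=
          (div_mul_cancel_of_imp fun hx₀ => by simp [h, norm_sub_eq_zero_iff.1 hx₀]).symm
      _ ≤ (supModulus φ Γ x₀ ε δ).toReal * δ :=
          mul_le_mul ((le_max_right _ _).trans hφx) (mem_closedBall_iff_norm.1 hx.1)
            (norm_nonneg _) ENNReal.toReal_nonneg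
      _ = δ * (supModulus φ Γ x₀ ε δ).toReal := mul_comm _ _

theorem isQDQ_criterion {N n : ℕ}
    {F : EuclideanSpace ℝ (Fin N) → EuclideanSpace ℝ (Fin n)}
    (hF : Continuous F)
    {Γ : Set (EuclideanSpace ℝ (Fin N))} {x₀ : EuclideanSpace ℝ (Fin N)}
    (hx₀ : x₀ ∈ Γ)
    {Λ : Set (EuclideanSpace ℝ (Fin N) →L[ℝ] EuclideanSpace ℝ (Fin n))}
    (hΛ : IsCompact Λ) {ε : ℝ} (hε : 0 < ε)
    {L : EuclideanSpace ℝ (Fin N) → (EuclideanSpace ℝ (Fin N) →L[ℝ] EuclideanSpace ℝ (Fin n))}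
    (hLcont : ContinuousOn L (closedBall x₀ ε ∩ Γ))
    (hdist : Tendsto (fun x => infDist (L x) Λ) (𝓝[Γ] x₀) (𝓝 0))
    (happrox : Tendsto (fun x => ‖F x - F x₀ - L x (x - x₀)‖ / ‖x - x₀‖)
      (𝓝[Γ \ {x₀}] x₀) (𝓝 0)) :
    IsQDQ Λ (fun x => {F x}) x₀ (F x₀) Γ :=
  isQDQ_criterion_general hF hΛ hε hLcont hdist happrox
end

section
/- Gronwall estimate for mollified flows: let F : ℝ × ℝⁿ → ℝⁿ with F(s,·) Lipschitz of constant L_F(s) where ∫₀ˢ L_F = A < ∞ and F(·,y) bounded measurable, and let F_σ(t,y) := ∫ F(t, y−h) η_σ(h) dh be the spatial mollification. If y(·) solves y' = F(s,y), y(0) = ξ and y_σ(·) solves y' = F_σ(s,y), y(0) = ξ on [0,S], then |y_σ(s) − y(s)| ≤ (A + A² e^A) σ for all s ∈ [0,S]. -/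
open Filter Topology Metric MeasureTheory
open scoped ENNReal NNReal

noncomputable def stdBump {n : ℕ} (x : EuclideanSpace ℝ (Fin n)) : ℝ :=
  if ‖x‖ < 1 then Real.exp (-(1 / (1 - ‖x‖ ^ 2))) else 0

noncomputable def bumpConst (n : ℕ) : ℝ := ∫ x : EuclideanSpace ℝ (Fin n), stdBump x

/-- The standard mollifier `η_σ(h) = σ⁻ⁿ η(h/σ)`. -/
noncomputable def stdMollifier {n : ℕ} (σ : ℝ) (h : EuclideanSpace ℝ (Fin n)) : ℝ :=
  (σ ^ n)⁻¹ * (stdBump (σ⁻¹ • h) / bumpConst n)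

/-!
Both flows satisfy integral equations, and the mollified field is uniformly close to the original
one: since `η_σ` is a probability density supported in `ball 0 σ`, the Lipschitz bound gives
`‖F_σ(s, x) - F(s, x')‖ ≤ L_F(s) (σ + ‖x - x'‖)`. Hence `u = σ + ‖y_σ - y‖` satisfies
`u(s) ≤ σ + ∫₀ˢ L_F u`, and Gronwall's inequality yields `u(s) ≤ σ e^A`, i.e.
`‖y_σ(s) - y(s)‖ ≤ σ (e^A - 1) ≤ (A + A² e^A) σ`. Gronwall's inequality with a merely integrable
rate is proved without differentiating: on a stretch `[s, t]` where `∫ₛᵗ L_F ≤ a`, the right-hand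
side grows at most by the factor `(1 - a)⁻¹`, and `(1 - A/N)^(-N) → e^A`.
-/
section Gronwall

open Set intervalIntegral

theorem one_sub_pow_mul_le_of_step {G H : ℝ → ℝ} {S a : ℝ} (ha₀ : 0 ≤ a) (ha₁ : a ≤ 1)
    (hG : ContinuousOn G (Icc 0 S)) (hG₀ : G 0 = 0) (hG_nonneg : ∀ t ∈ Icc 0 S, 0 ≤ G t)
    (hstep : ∀ s ∈ Icc 0 S, ∀ t ∈ Icc 0 S, s ≤ t → G t - G s ≤ a → (1 - a) * H t ≤ H s)
    (i : ℕ) : ∀ t ∈ Icc 0 S, G t ≤ (i + 1) * a → (1 - a) ^ (i + 1) * H t ≤ H 0 := by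
  induction i with
  | zero =>
    intro t ht hGt
    simpa using hstep 0 ⟨le_rfl, ht.1.trans ht.2⟩ t ht ht.1 (by simpa [hG₀] using hGt)
  | succ i ih =>
    intro t ht hGt
    obtain ⟨s, hs, hGs⟩ : min (G t) ((i + 1) * a) ∈ G '' Icc 0 t := by
      refine intermediate_value_Icc ht.1 (hG.mono (Icc_subset_Icc le_rfl ht.2))
        ⟨?_, min_le_left _ _⟩
      rw [hG₀]
      exact le_min (hG_nonneg t ht) (by positivity)
    have hsS : s ∈ Icc 0 S := ⟨hs.1, hs.2.trans ht.2⟩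
    have hts : G t - G s ≤ a := by
      rw [hGs]
      push_cast at hGt
      rcases min_choice (G t) ((i + 1) * a) with h | h <;> rw [h] <;> linarith
    calc (1 - a) ^ (i + 1 + 1) * H t = (1 - a) ^ (i + 1) * ((1 - a) * H t) := by ring
      _ ≤ (1 - a) ^ (i + 1) * H s :=
        mul_le_mul_of_nonneg_left (hstep s hsS t ht hs.2 hts) (by simp [ha₁])
      _ ≤ H 0 := ih s hsS (hGs ▸ min_le_right _ _)

variable {g u : ℝ → ℝ} {c S : ℝ}

theorem intervalIntegrable_of_integrableOn_Icc {E : Type*} [NormedAddCommGroup E] {f : ℝ → E}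
    (hf : IntegrableOn f (Icc 0 S))
    {s t : ℝ} (hs : s ∈ Icc 0 S) (ht : t ∈ Icc 0 S) (hst : s ≤ t) :
    IntervalIntegrable f volume s t :=
  (intervalIntegrable_iff_integrableOn_Icc_of_le hst).2
    (hf.mono_set (Icc_subset_Icc hs.1 ht.2))

theorem monotoneOn_primitive_of_nonneg {f : ℝ → ℝ} (hf : ∀ τ ∈ Icc 0 S, 0 ≤ f τ)
    (hfi : IntegrableOn f (Icc 0 S)) : MonotoneOn (fun t => ∫ τ in 0..t, f τ) (Icc 0 S) := by
  intro s hs t ht hst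
  have h₀ : (0 : ℝ) ∈ Icc 0 S := ⟨le_rfl, hs.1.trans hs.2⟩
  refine integral_mono_interval le_rfl hs.1 hst ?_
    (intervalIntegrable_of_integrableOn_Icc hfi h₀ ht ht.1)
  exact (ae_restrict_iff' measurableSet_Ioc).2
    (Eventually.of_forall fun τ hτ => hf τ ⟨hτ.1.le, hτ.2.trans ht.2⟩)

theorem le_mul_exp_integral_of_le_add_integral
    (hg : ∀ τ ∈ Icc 0 S, 0 ≤ g τ) (hu : ∀ τ ∈ Icc 0 S, 0 ≤ u τ)
    (hgi : IntegrableOn g (Icc 0 S)) (hgu : IntegrableOn (fun τ => g τ * u τ) (Icc 0 S))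
    (hle : ∀ t ∈ Icc 0 S, u t ≤ c + ∫ τ in 0..t, g τ * u τ) :
    ∀ t ∈ Icc 0 S, u t ≤ c * Real.exp (∫ τ in 0..t, g τ) := by
  set G : ℝ → ℝ := fun t => ∫ τ in 0..t, g τ
  set H : ℝ → ℝ := fun t => c + ∫ τ in 0..t, g τ * u τ
  have hG_mono : MonotoneOn G (Icc 0 S) := monotoneOn_primitive_of_nonneg hg hgi
  have hH_mono : MonotoneOn H (Icc 0 S) := fun s hs t ht hst =>
    add_le_add_right (monotoneOn_primitive_of_nonneg
      (fun τ hτ => mul_nonneg (hg τ hτ) (hu τ hτ)) hgu hs ht hst) c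
  have hstep : ∀ a, ∀ s ∈ Icc 0 S, ∀ t ∈ Icc 0 S, s ≤ t → G t - G s ≤ a →
      (1 - a) * H t ≤ H s := by
    intro a s hs t ht hst hGa
    have h₀ : (0 : ℝ) ∈ Icc 0 S := ⟨le_rfl, hs.1.trans hs.2⟩
    -- On `[s, t]` we have `u ≤ H ≤ H t`.
    have hdiff : H t - H s ≤ (G t - G s) * H t := calc
      H t - H s = ∫ τ in s..t, g τ * u τ := by
        simp only [H, add_sub_add_left_eq_sub]
        exact integral_interval_sub_left
          (intervalIntegrable_of_integrableOn_Icc hgu h₀ ht ht.1)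
          (intervalIntegrable_of_integrableOn_Icc hgu h₀ hs hs.1)
      _ ≤ ∫ τ in s..t, g τ * H t := by
        refine integral_mono_on hst (intervalIntegrable_of_integrableOn_Icc hgu hs ht hst)
          ((intervalIntegrable_of_integrableOn_Icc hgi hs ht hst).mul_const _) fun τ hτ => ?_
        have hτS : τ ∈ Icc 0 S := ⟨hs.1.trans hτ.1, hτ.2.trans ht.2⟩
        exact mul_le_mul_of_nonneg_left ((hle τ hτS).trans (hH_mono hτS ht hτ.2)) (hg τ hτS)
      _ = (G t - G s) * H t := by
        rw [intervalIntegral.integral_mul_const, integral_interval_sub_left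
          (intervalIntegrable_of_integrableOn_Icc hgi h₀ ht ht.1)
          (intervalIntegrable_of_integrableOn_Icc hgi h₀ hs hs.1)]
    have hHt : 0 ≤ H t := (hu t ht).trans (hle t ht)
    nlinarith
  intro t ht
  have h₀ : (0 : ℝ) ∈ Icc 0 S := ⟨le_rfl, ht.1.trans ht.2⟩
  have hG₀ : G 0 = 0 := integral_same
  have hG_nonneg : ∀ s ∈ Icc 0 S, 0 ≤ G s := fun s hs => hG₀ ▸ hG_mono h₀ hs hs.1
  have hG : ContinuousOn G (Icc 0 S) := by
    have := continuousOn_primitive_interval (μ := volume) (f := g) (a := 0) (b := S)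
      (by rwa [uIcc_of_le h₀.2])
    rwa [uIcc_of_le h₀.2] at this
  have hlim : Tendsto (fun N : ℕ => (1 + -G t / (N + 1 : ℕ)) ^ (N + 1) * H t) atTop
      (𝓝 (Real.exp (-G t) * H t)) :=
    ((Real.tendsto_one_add_div_pow_exp (-G t)).comp (tendsto_add_atTop_nat 1)).mul_const _
  have hbound : ∀ᶠ N : ℕ in atTop, (1 + -G t / (N + 1 : ℕ)) ^ (N + 1) * H t ≤ c := by
    filter_upwards [(tendsto_natCast_atTop_atTop (R := ℝ)).eventually_ge_atTop (G t)] with N hN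
    have hN₁ : (0 : ℝ) < (N + 1 : ℕ) := by positivity
    have ha₀ : 0 ≤ G t / (N + 1 : ℕ) := div_nonneg (hG_nonneg t ht) hN₁.le
    have ha₁ : G t / (N + 1 : ℕ) ≤ 1 := by rw [div_le_one hN₁]; push_cast; linarith
    rw [neg_div, ← sub_eq_add_neg]
    simpa [H] using one_sub_pow_mul_le_of_step ha₀ ha₁ hG hG₀ hG_nonneg (hstep _) N t ht
      (by rw [← Nat.cast_add_one, mul_div_cancel₀ _ hN₁.ne'])
  calc u t ≤ H t := hle t ht
    _ = Real.exp (G t) * (Real.exp (-G t) * H t) := by rw [← mul_assoc, ← Real.exp_add]; simp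
    _ ≤ c * Real.exp (G t) := by
      rw [mul_comm c]
      exact mul_le_mul_of_nonneg_left (le_of_tendsto hlim hbound) (Real.exp_pos _).le

theorem norm_sub_le_integral_of_norm_sub_le {E : Type*} [NormedAddCommGroup E]
    [NormedSpace ℝ E] {f g x z : ℝ → E} {b : ℝ → ℝ} {ξ : E}
    (hf : IntegrableOn f (Icc 0 S)) (hg : IntegrableOn g (Icc 0 S))
    (hb : IntegrableOn b (Icc 0 S)) (hfg : ∀ τ ∈ Icc 0 S, ‖g τ - f τ‖ ≤ b τ)
    (hx : ∀ t ∈ Icc 0 S, x t = ξ + ∫ τ in 0..t, f τ)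
    (hz : ∀ t ∈ Icc 0 S, z t = ξ + ∫ τ in 0..t, g τ) :
    ∀ t ∈ Icc 0 S, ‖z t - x t‖ ≤ ∫ τ in 0..t, b τ := by
  intro t ht
  have h₀ : (0 : ℝ) ∈ Icc 0 S := ⟨le_rfl, ht.1.trans ht.2⟩
  rw [hx t ht, hz t ht, add_sub_add_left_eq_sub, ← integral_sub
    (intervalIntegrable_of_integrableOn_Icc hg h₀ ht ht.1)
    (intervalIntegrable_of_integrableOn_Icc hf h₀ ht ht.1)]
  exact norm_integral_le_of_norm_le ht.1 (Eventually.of_forall fun τ hτ =>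
    hfg τ ⟨hτ.1.le, hτ.2.trans ht.2⟩) (intervalIntegrable_of_integrableOn_Icc hb h₀ ht ht.1)

end Gronwall

section Mollifier

variable {n : ℕ}

theorem stdBump_nonneg (x : EuclideanSpace ℝ (Fin n)) : 0 ≤ stdBump x := by
  unfold stdBump; split <;> positivity

theorem stdBump_le_one (x : EuclideanSpace ℝ (Fin n)) : stdBump x ≤ 1 := by
  unfold stdBump
  split
  · rename_i hx
    have : 0 < 1 - ‖x‖ ^ 2 := by nlinarith [norm_nonneg x]
    exact Real.exp_le_one_iff.2 (neg_nonpos.2 (by positivity))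
  · exact zero_le_one

theorem stdBump_eq_zero {x : EuclideanSpace ℝ (Fin n)} (hx : 1 ≤ ‖x‖) : stdBump x = 0 :=
  if_neg hx.not_gt

theorem support_stdBump : Function.support (stdBump (n := n)) = ball 0 1 := by
  ext x
  rw [Function.mem_support, mem_ball_zero_iff, stdBump]
  by_cases hx : ‖x‖ < 1 <;> simp [hx, Real.exp_ne_zero]

theorem measurable_stdBump : Measurable (stdBump (n := n)) :=
  Measurable.ite (measurableSet_lt (by fun_prop) measurable_const) (by fun_prop) measurable_const

theorem integrable_stdBump : Integrable (stdBump (n := n)) := by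
  refine (integrableOn_iff_integrable_of_support_subset support_stdBump.subset).1 ?_
  refine Measure.integrableOn_of_bounded (M := 1) measure_ball_lt_top.ne
    measurable_stdBump.aestronglyMeasurable (Eventually.of_forall fun x => ?_)
  rw [Real.norm_of_nonneg (stdBump_nonneg x)]
  exact stdBump_le_one x

theorem bumpConst_pos : 0 < bumpConst n := by
  rw [bumpConst, integral_pos_iff_support_of_nonneg stdBump_nonneg integrable_stdBump,
    support_stdBump]
  exact measure_ball_pos _ _ one_pos

variable {σ : ℝ}

theorem stdMollifier_nonneg (hσ : 0 < σ) (h : EuclideanSpace ℝ (Fin n)) :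
    0 ≤ stdMollifier σ h := by
  have := stdBump_nonneg (σ⁻¹ • h)
  have := bumpConst_pos (n := n)
  unfold stdMollifier
  positivity

theorem stdMollifier_eq_zero (hσ : 0 < σ) {h : EuclideanSpace ℝ (Fin n)} (hh : h ∉ ball 0 σ) :
    stdMollifier σ h = 0 := by
  rw [mem_ball_zero_iff, not_lt] at hh
  rw [stdMollifier, stdBump_eq_zero, zero_div, mul_zero]
  rwa [norm_smul, norm_inv, Real.norm_of_nonneg hσ.le, inv_mul_eq_div, one_le_div hσ]

theorem measurable_stdMollifier : Measurable (stdMollifier (n := n) σ) :=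
  measurable_const.mul ((measurable_stdBump.comp (measurable_const_smul _)).div_const _)

theorem integrable_stdMollifier (hσ : 0 < σ) : Integrable (stdMollifier (n := n) σ) :=
  ((integrable_stdBump.comp_smul (inv_ne_zero hσ.ne')).div_const _).const_mul _

theorem integral_stdMollifier (hσ : 0 < σ) :
    ∫ h : EuclideanSpace ℝ (Fin n), stdMollifier σ h = 1 := by
  have hb := bumpConst_pos (n := n)
  simp_rw [stdMollifier, integral_const_mul, div_eq_mul_inv, integral_mul_const,
    Measure.integral_comp_smul volume (stdBump (n := n)) σ⁻¹, finrank_euclideanSpace_fin,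
    smul_eq_mul, inv_pow, inv_inv, abs_of_pos (pow_pos hσ n)]
  rw [← bumpConst]
  field_simp

end Mollifier

section Mollify

variable {n : ℕ} {E : Type*} [NormedAddCommGroup E] [NormedSpace ℝ E] {σ M : ℝ}

theorem norm_stdMollifier_smul_le {f : EuclideanSpace ℝ (Fin n) → E} (hσ : 0 < σ)
    (hf : ∀ h ∈ ball 0 σ, ‖f h‖ ≤ M) (h : EuclideanSpace ℝ (Fin n)) :
    ‖stdMollifier σ h • f h‖ ≤ M * stdMollifier σ h := by
  by_cases hh : h ∈ ball 0 σ
  · rw [norm_smul, Real.norm_of_nonneg (stdMollifier_nonneg hσ h), mul_comm]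
    exact mul_le_mul_of_nonneg_right (hf h hh) (stdMollifier_nonneg hσ h)
  · simp [stdMollifier_eq_zero hσ hh]

theorem integrable_stdMollifier_smul {f : EuclideanSpace ℝ (Fin n) → E} (hσ : 0 < σ)
    (hfm : AEStronglyMeasurable f) (hf : ∀ h ∈ ball 0 σ, ‖f h‖ ≤ M) :
    Integrable fun h => stdMollifier σ h • f h :=
  ((integrable_stdMollifier hσ).const_mul M).mono'
    (measurable_stdMollifier.aestronglyMeasurable.smul hfm)
    (Eventually.of_forall (norm_stdMollifier_smul_le hσ hf))

theorem norm_integral_stdMollifier_smul_le {f : EuclideanSpace ℝ (Fin n) → E} (hσ : 0 < σ)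
    (hf : ∀ h ∈ ball 0 σ, ‖f h‖ ≤ M) : ‖∫ h, stdMollifier σ h • f h‖ ≤ M :=
  calc ‖∫ h, stdMollifier σ h • f h‖ ≤ ∫ h, M * stdMollifier σ h :=
        norm_integral_le_of_norm_le ((integrable_stdMollifier hσ).const_mul M)
          (Eventually.of_forall (norm_stdMollifier_smul_le hσ hf))
    _ = M := by rw [integral_const_mul, integral_stdMollifier hσ, mul_one]

noncomputable def mollify (σ : ℝ) (G : EuclideanSpace ℝ (Fin n) → E)
    (x : EuclideanSpace ℝ (Fin n)) : E :=
  ∫ h, stdMollifier σ h • G (x - h)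

variable {L : ℝ≥0} {G : EuclideanSpace ℝ (Fin n) → E}

theorem integrable_stdMollifier_smul_comp_sub (hσ : 0 < σ) (hG : LipschitzWith L G)
    (x : EuclideanSpace ℝ (Fin n)) : Integrable fun h => stdMollifier σ h • G (x - h) := by
  refine integrable_stdMollifier_smul (M := ‖G x‖ + L * σ) hσ
    (hG.continuous.comp (continuous_sub_left x)).aestronglyMeasurable fun h hh => ?_
  have := hG.norm_sub_le (x - h) x
  rw [sub_sub_cancel_left, norm_neg] at this
  have : (L : ℝ) * ‖h‖ ≤ L * σ := by gcongr; exact mem_ball_zero_iff.1 hh |>.le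
  linarith [norm_le_norm_add_norm_sub' (G (x - h)) (G x)]

theorem norm_mollify_sub_self_le [CompleteSpace E] (hσ : 0 < σ) (hG : LipschitzWith L G)
    (x : EuclideanSpace ℝ (Fin n)) : ‖mollify σ G x - G x‖ ≤ L * σ := by
  have hGx : G x = ∫ h : EuclideanSpace ℝ (Fin n), stdMollifier σ h • G x := by
    rw [integral_smul_const, integral_stdMollifier hσ, one_smul]
  rw [mollify, hGx, ← integral_sub (integrable_stdMollifier_smul_comp_sub hσ hG x)
    ((integrable_stdMollifier hσ).smul_const _)]
  simp_rw [← smul_sub]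
  refine norm_integral_stdMollifier_smul_le hσ fun h hh => ?_
  calc ‖G (x - h) - G x‖ ≤ L * ‖x - h - x‖ := hG.norm_sub_le _ _
    _ ≤ L * σ := by
      rw [sub_sub_cancel_left, norm_neg]
      gcongr
      exact (mem_ball_zero_iff.1 hh).le

theorem lipschitzWith_mollify (hσ : 0 < σ) (hG : LipschitzWith L G) :
    LipschitzWith L (mollify σ G) := by
  refine LipschitzWith.of_dist_le_mul fun x x' => ?_
  rw [dist_eq_norm, dist_eq_norm, mollify, mollify,
    ← integral_sub (integrable_stdMollifier_smul_comp_sub hσ hG x)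
      (integrable_stdMollifier_smul_comp_sub hσ hG x')]
  simp_rw [← smul_sub]
  exact norm_integral_stdMollifier_smul_le hσ fun h _ => by
    simpa using hG.norm_sub_le (x - h) (x' - h)

theorem norm_mollify_sub_le [CompleteSpace E] (hσ : 0 < σ) (hG : LipschitzWith L G)
    (x x' : EuclideanSpace ℝ (Fin n)) : ‖mollify σ G x - G x'‖ ≤ L * (σ + ‖x - x'‖) :=
  calc ‖mollify σ G x - G x'‖ ≤ ‖mollify σ G x - G x‖ + ‖G x - G x'‖ :=
        norm_sub_le_norm_sub_add_norm_sub _ _ _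
    _ ≤ L * σ + L * ‖x - x'‖ := add_le_add (norm_mollify_sub_self_le hσ hG x) (hG.norm_sub_le _ _)
    _ = L * (σ + ‖x - x'‖) := by ring

end Mollify

section Caratheodory

open Set

variable {E X : Type*} [NormedAddCommGroup E] [MeasurableSpace E] [BorelSpace E]
  [NormedAddCommGroup X] [MeasurableSpace X] [BorelSpace X] {L : ℝ → ℝ≥0}

theorem measurable_uncurry_of_caratheodory [SecondCountableTopology X] {H : ℝ → X → E}
    (hc : ∀ τ, Continuous (H τ)) (hm : ∀ x, Measurable fun τ => H τ x) :
    Measurable (Function.uncurry H) :=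
  (measurable_uncurry_of_continuous_of_measurable (u := fun x τ => H τ x) hc hm).comp
    measurable_swap

theorem integrableOn_comp_of_lipschitzWith [SecondCountableTopology E] {H : ℝ → X → E}
    {w : ℝ → X} {ξ : X} {a b : ℝ}
    (hH : Measurable (Function.uncurry H)) (hLip : ∀ τ, LipschitzWith (L τ) (H τ))
    (hL : IntegrableOn (fun τ => (L τ : ℝ)) (Icc a b))
    (hξ : IntegrableOn (fun τ => H τ ξ) (Icc a b)) (hw : ContinuousOn w (Icc a b)) :
    IntegrableOn (fun τ => H τ (w τ)) (Icc a b) := by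
  obtain ⟨C, hC⟩ := isCompact_Icc.exists_bound_of_continuousOn (hw.sub continuousOn_const)
  refine (hξ.norm.add (hL.mul_const C)).mono'
    (hH.comp_aemeasurable (aemeasurable_id.prodMk
      (hw.aemeasurable measurableSet_Icc))).aestronglyMeasurable ?_
  refine (ae_restrict_iff' measurableSet_Icc).2 (Eventually.of_forall fun τ hτ => ?_)
  have hwτ : (L τ : ℝ) * ‖w τ - ξ‖ ≤ L τ * C := by gcongr; simpa using hC τ hτ
  show ‖H τ (w τ)‖ ≤ ‖H τ ξ‖ + L τ * C
  linarith [norm_le_norm_add_norm_sub' (H τ (w τ)) (H τ ξ), (hLip τ).norm_sub_le (w τ) ξ]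

variable [NormedSpace ℝ E] [SecondCountableTopology E] {n : ℕ} {σ : ℝ}
  {F : ℝ → EuclideanSpace ℝ (Fin n) → E}

theorem measurable_mollify_apply (hF : Measurable (Function.uncurry F))
    (x : EuclideanSpace ℝ (Fin n)) : Measurable fun τ => mollify σ (F τ) x :=
  (measurable_stdMollifier.comp measurable_snd).smul
    (hF.comp (measurable_fst.prodMk (measurable_const.sub measurable_snd)))
    |>.stronglyMeasurable.integral_prod_right'.measurable

theorem measurable_uncurry_mollify (hσ : 0 < σ) (hLip : ∀ τ, LipschitzWith (L τ) (F τ))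
    (hm : ∀ x, Measurable fun τ => F τ x) :
    Measurable (Function.uncurry fun τ => mollify σ (F τ)) :=
  measurable_uncurry_of_caratheodory (fun τ => (lipschitzWith_mollify hσ (hLip τ)).continuous)
    (measurable_mollify_apply
      (measurable_uncurry_of_caratheodory (fun τ => (hLip τ).continuous) hm))

theorem integrableOn_mollify_apply [CompleteSpace E] {s : Set ℝ} (hσ : 0 < σ)
    (hF : Measurable (Function.uncurry F)) (hLip : ∀ τ, LipschitzWith (L τ) (F τ))
    (hL : IntegrableOn (fun τ => (L τ : ℝ)) s)
    {ξ : EuclideanSpace ℝ (Fin n)} (hξ : IntegrableOn (fun τ => F τ ξ) s) :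
    IntegrableOn (fun τ => mollify σ (F τ) ξ) s :=
  (hξ.norm.add (hL.mul_const σ)).mono' (measurable_mollify_apply hF ξ).aestronglyMeasurable
    (Eventually.of_forall fun τ => by
      show ‖mollify σ (F τ) ξ‖ ≤ ‖F τ ξ‖ + L τ * σ
      linarith [norm_le_norm_add_norm_sub' (mollify σ (F τ) ξ) (F τ ξ),
        norm_mollify_sub_self_le hσ (hLip τ) ξ])

end Caratheodory

theorem Real.exp_le_one_add_add_sq_mul_exp {x : ℝ} (hx : 0 ≤ x) :
    Real.exp x ≤ 1 + x + x ^ 2 * Real.exp x := by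
  have h : (1 - x) * Real.exp x ≤ 1 := by
    simpa [← Real.exp_add] using
      mul_le_mul_of_nonneg_right (Real.one_sub_le_exp_neg x) (Real.exp_pos x).le
  nlinarith [mul_le_mul_of_nonneg_left (show Real.exp x ≤ 1 + x * Real.exp x by linarith) hx]

theorem gronwall_mollified_flow_general {n : ℕ} {S A σ : ℝ} (hσ : 0 < σ)
    {F : ℝ → EuclideanSpace ℝ (Fin n) → EuclideanSpace ℝ (Fin n)}
    {LF : ℝ → ℝ≥0}
    (hLip : ∀ s, LipschitzWith (LF s) (F s))
    (hLFint : IntegrableOn (fun s => (LF s : ℝ)) (Set.Icc 0 S))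
    (hA : ∫ s in Set.Icc (0:ℝ) S, (LF s : ℝ) = A)
    (hmeas : ∀ y, Measurable fun s => F s y)
    (hbdd : ∀ y, ∃ M, ∀ s, ‖F s y‖ ≤ M)
    {ξ : EuclideanSpace ℝ (Fin n)} {y yσ : ℝ → EuclideanSpace ℝ (Fin n)}
    (hycont : ContinuousOn y (Set.Icc 0 S)) (hyσcont : ContinuousOn yσ (Set.Icc 0 S))
    (hy : ∀ s ∈ Set.Icc (0:ℝ) S, y s = ξ + ∫ τ in (0:ℝ)..s, F τ (y τ))
    (hyσ : ∀ s ∈ Set.Icc (0:ℝ) S,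
      yσ s = ξ + ∫ τ in (0:ℝ)..s,
        ∫ h : EuclideanSpace ℝ (Fin n), stdMollifier σ h • F τ (yσ τ - h)) :
    ∀ s ∈ Set.Icc (0:ℝ) S, ‖yσ s - y s‖ ≤ (A + A ^ 2 * Real.exp A) * σ := by
  intro s hs
  have hF := measurable_uncurry_of_caratheodory (fun τ => (hLip τ).continuous) hmeas
  obtain ⟨M, hM⟩ := hbdd ξ
  have hFξ : IntegrableOn (fun τ => F τ ξ) (Set.Icc 0 S) :=
    Measure.integrableOn_of_bounded measure_Icc_lt_top.ne (hmeas ξ).aestronglyMeasurable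
      (Eventually.of_forall hM)
  have hgu : IntegrableOn (fun τ => (LF τ : ℝ) * (σ + ‖yσ τ - y τ‖)) (Set.Icc 0 S) :=
    hLFint.mul_continuousOn (continuousOn_const.add (hyσcont.sub hycont).norm) isCompact_Icc
  have hdist := norm_sub_le_integral_of_norm_sub_le
    (integrableOn_comp_of_lipschitzWith hF hLip hLFint hFξ hycont)
    (integrableOn_comp_of_lipschitzWith (measurable_uncurry_mollify hσ hLip hmeas)
      (fun τ => lipschitzWith_mollify hσ (hLip τ)) hLFint
      (integrableOn_mollify_apply hσ hF hLip hLFint hFξ) hyσcont)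
    hgu (fun τ _ => norm_mollify_sub_le hσ (hLip τ) _ _) hy hyσ
  have hgronwall := le_mul_exp_integral_of_le_add_integral (fun τ _ => (LF τ).2)
    (fun τ _ => by positivity) hLFint hgu (fun t ht => add_le_add_right (hdist t ht) σ) s hs
  have hGA : ∫ τ in 0..s, (LF τ : ℝ) ≤ A := by
    rw [intervalIntegral.integral_of_le hs.1, ← hA]
    exact setIntegral_mono_set hLFint (Eventually.of_forall fun τ => (LF τ).2)
      (Set.Ioc_subset_Icc_self.trans (Set.Icc_subset_Icc_right hs.2)).eventuallyLE
  have hA₀ : 0 ≤ A := hA ▸ setIntegral_nonneg measurableSet_Icc fun τ _ => (LF τ).2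
  calc ‖yσ s - y s‖ ≤ σ * Real.exp (∫ τ in 0..s, (LF τ : ℝ)) - σ :=
        le_sub_iff_add_le'.2 hgronwall
    _ ≤ σ * (1 + A + A ^ 2 * Real.exp A) - σ := by
      gcongr
      exact (Real.exp_le_exp.2 hGA).trans (Real.exp_le_one_add_add_sq_mul_exp hA₀)
    _ = (A + A ^ 2 * Real.exp A) * σ := by ring

theorem gronwall_mollified_flow {n : ℕ} {S A σ : ℝ} (hS : 0 < S) (hσ : 0 < σ)
    {F : ℝ → EuclideanSpace ℝ (Fin n) → EuclideanSpace ℝ (Fin n)}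
    {LF : ℝ → ℝ≥0}
    (hLip : ∀ s, LipschitzWith (LF s) (F s))
    (hLFint : IntegrableOn (fun s => (LF s : ℝ)) (Set.Icc 0 S))
    (hA : ∫ s in Set.Icc (0:ℝ) S, (LF s : ℝ) = A)
    (hmeas : ∀ y, Measurable fun s => F s y)
    (hbdd : ∀ y, ∃ M, ∀ s, ‖F s y‖ ≤ M)
    {ξ : EuclideanSpace ℝ (Fin n)} {y yσ : ℝ → EuclideanSpace ℝ (Fin n)}
    (hycont : ContinuousOn y (Set.Icc 0 S)) (hyσcont : ContinuousOn yσ (Set.Icc 0 S))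
    (hy : ∀ s ∈ Set.Icc (0:ℝ) S, y s = ξ + ∫ τ in (0:ℝ)..s, F τ (y τ))
    (hyσ : ∀ s ∈ Set.Icc (0:ℝ) S,
      yσ s = ξ + ∫ τ in (0:ℝ)..s,
        ∫ h : EuclideanSpace ℝ (Fin n), stdMollifier σ h • F τ (yσ τ - h)) :
    ∀ s ∈ Set.Icc (0:ℝ) S, ‖yσ s - y s‖ ≤ (A + A ^ 2 * Real.exp A) * σ :=
  gronwall_mollified_flow_general hσ hLip hLFint hA hmeas hbdd hycont hyσcont hy hyσ
end

section
/- Limit of solutions of a bounded linear differential inclusion: let B : [0,S] ⇝ Lin(ℝⁿ,ℝⁿ) and C : [0,S] ⇝ ℝⁿ be measurable set-valued maps with compact convex nonempty values, all contained in balls of radius R around the origin. Let p_n : [0,S] → (ℝⁿ)* be a sequence of absolutely continuous solutions of ṗ(s) ∈ p(s)B(s) + C(s) a.e., with |p_n(S)| ≤ 1 for all n. Then some subsequence of (p_n) converges uniformly on [0,S] to a function p, and p is also an absolutely continuous solution of the same differential inclusion. -/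
open Filter Topology MeasureTheory

/-- `p` is an (absolutely continuous, in integral form) solution on `[0,S]` of the
differential inclusion `ṗ(s) ∈ p(s)·B(s) + C(s)`, where matrices are represented
as elements of `Fin n → Fin n → ℝ` and `p(s)·M` is the row-vector–matrix product. -/
def IsSolInclusion {n : ℕ} (S : ℝ) (B : ℝ → Set (Fin n → Fin n → ℝ))
    (C : ℝ → Set (Fin n → ℝ)) (p : ℝ → Fin n → ℝ) : Prop :=
  ∃ v : ℝ → Fin n → ℝ, IntervalIntegrable v volume 0 S ∧
    (∀ᵐ s ∂(volume.restrict (Set.Icc 0 S)),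
      ∃ M ∈ B s, ∃ c ∈ C s, v s = (fun j => ∑ i, p s i * M i j) + c) ∧
    ∀ t ∈ Set.Icc (0:ℝ) S, p t = p 0 + ∫ σ in (0:ℝ)..t, v σ

/-!
A solution satisfies `‖ṗ‖ ≤ nR‖p‖ + R`, so the backward Grönwall inequality started from
`‖p S‖ ≤ 1` bounds all `p_k` uniformly and makes them equi-Lipschitz, and Arzelà–Ascoli gives a
uniformly convergent subsequence. To pass to the limit in the inclusion, view the derivatives
`ṗ_k` as a bounded sequence in the Hilbert space `L²`. The closed convex hulls of its tails are
nested, so their elements of least norm form a Cauchy sequence; its limit `v` lies in every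
closed convex set that eventually contains the `ṗ_k`. As `p_k → p` uniformly and `B` is bounded,
the sets `{f | f s is δ-close to p(s)B(s) + C(s) a.e.}` are such sets, and so are those on which
`⟪c, ∫_A f⟫` is δ-close to its limit; hence `v s ∈ p(s)B(s) + C(s)` a.e. and `v` is the
derivative of `p`.
-/

open Set Metric Matrix Pointwise

theorem le_mul_exp_of_le_add_mul_integral {g : ℝ → ℝ} {a b c K : ℝ}
    (hg : ContinuousOn g (Icc a b)) (hK : 0 ≤ K)
    (h : ∀ t ∈ Icc a b, g t ≤ c + K * ∫ x in a..t, g x) :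
    ∀ t ∈ Icc a b, g t ≤ c * Real.exp (K * (t - a)) := by
  set F := fun t => ∫ x in a..t, g x
  have hF_cont : ContinuousOn F (Icc a b) :=
    (intervalIntegral.continuousOn_primitive hg.integrableOn_Icc).congr fun t ht =>
      intervalIntegral.integral_of_le ht.1
  have hF_deriv : ∀ t ∈ Ico a b, HasDerivWithinAt F (g t) (Ici t) t := fun t ht =>
    intervalIntegral.integral_hasDerivWithinAt_right ((hg.mono (uIcc_subset_Icc
      (left_mem_Icc.2 (ht.1.trans ht.2.le)) (Ico_subset_Icc_self ht))).intervalIntegrable)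
      ⟨Icc a b, Icc_mem_nhdsGT_of_mem ht, hg.aestronglyMeasurable measurableSet_Icc⟩
      ((hg t (Ico_subset_Icc_self ht)).mono_of_mem_nhdsWithin (Icc_mem_nhdsGT_of_mem ht))
  have hF_le := le_gronwallBound_of_liminf_deriv_right_le (δ := 0) (K := K) (ε := c) hF_cont
    (fun t ht r hr => (hF_deriv t ht).liminf_right_slope_le hr) (by simp [F])
    (fun t ht => by linarith [h t (Ico_subset_Icc_self ht)])
  intro t ht
  calc g t ≤ c + K * F t := h t ht
    _ ≤ c + K * gronwallBound 0 K c (t - a) := by gcongr; exact hF_le t ht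
    _ = c * Real.exp (K * (t - a)) := by
      rcases hK.eq_or_lt with rfl | hK
      · simp
      · rw [gronwallBound_of_K_ne_0 hK.ne']
        field_simp
        ring

theorem le_mul_exp_of_le_add_mul_integral_right {g : ℝ → ℝ} {a b c K : ℝ}
    (hg : ContinuousOn g (Icc a b)) (hK : 0 ≤ K)
    (h : ∀ t ∈ Icc a b, g t ≤ c + K * ∫ x in t..b, g x) :
    ∀ t ∈ Icc a b, g t ≤ c * Real.exp (K * (b - t)) := by
  have hmaps : MapsTo (fun x => a + b - x) (Icc a b) (Icc a b) := fun x hx =>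
    ⟨by linarith [hx.2], by linarith [hx.1]⟩
  have hrefl := le_mul_exp_of_le_add_mul_integral (g := fun x => g (a + b - x))
    (hg.comp (by fun_prop) hmaps) hK fun τ hτ => by
      simpa [intervalIntegral.integral_comp_sub_left] using h _ (hmaps hτ)
  intro t ht
  have := hrefl (a + b - t) (hmaps ht)
  rwa [sub_sub_cancel, sub_right_comm, add_sub_cancel_left] at this

section Primitive

variable {E : Type*} [NormedAddCommGroup E] [NormedSpace ℝ E] {S : ℝ} {p v : ℝ → E}

theorem sub_eq_integral_of_eq_add_integral (hv : IntervalIntegrable v volume 0 S)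
    (hp : ∀ t ∈ Icc 0 S, p t = p 0 + ∫ σ in 0..t, v σ) {t t' : ℝ} (ht : t ∈ Icc 0 S)
    (ht' : t' ∈ Icc 0 S) : p t - p t' = ∫ σ in t'..t, v σ := by
  have hsub : ∀ {τ}, τ ∈ Icc 0 S → IntervalIntegrable v volume 0 τ := fun hτ =>
    hv.mono_set (uIcc_subset_uIcc left_mem_uIcc (mem_uIcc_of_le hτ.1 hτ.2))
  rw [hp t ht, hp t' ht', add_sub_add_left_eq_sub,
    intervalIntegral.integral_interval_sub_left (hsub ht) (hsub ht')]

theorem continuousOn_of_eq_add_integral (hv : IntervalIntegrable v volume 0 S)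
    (hp : ∀ t ∈ Icc 0 S, p t = p 0 + ∫ σ in 0..t, v σ) : ContinuousOn p (Icc 0 S) := by
  rcases le_or_gt 0 S with hS | hS
  · refine ((continuousOn_const (c := p 0)).add (intervalIntegral.continuousOn_primitive
      ((intervalIntegrable_iff_integrableOn_Icc_of_le hS).1 hv))).congr fun t ht => ?_
    rw [hp t ht, intervalIntegral.integral_of_le ht.1, Pi.add_apply]
  · rw [Icc_eq_empty hS.not_ge]
    exact continuousOn_empty p

theorem lipschitzOnWith_of_eq_add_integral (hv : IntervalIntegrable v volume 0 S)
    (hp : ∀ t ∈ Icc 0 S, p t = p 0 + ∫ σ in 0..t, v σ) {L : NNReal}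
    (hvL : ∀ᵐ s ∂volume.restrict (Icc 0 S), ‖v s‖ ≤ L) : LipschitzOnWith L p (Icc 0 S) := by
  refine LipschitzOnWith.of_dist_le_mul fun t ht t' ht' => ?_
  rw [dist_eq_norm, sub_eq_integral_of_eq_add_integral hv hp ht ht', Real.dist_eq]
  refine (intervalIntegral.norm_integral_le_of_norm_le_const_ae ?_).trans_eq
    (by rw [abs_sub_comm])
  filter_upwards [(ae_restrict_iff' measurableSet_Icc).1 hvL] with s hs hsI
  exact hs (uIoc_subset_uIcc.trans (uIcc_subset_Icc ht' ht) hsI)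

theorem norm_le_of_eq_add_integral_of_norm_le (hv : IntervalIntegrable v volume 0 S)
    (hp : ∀ t ∈ Icc 0 S, p t = p 0 + ∫ σ in 0..t, v σ) {a b : ℝ} (ha : 0 ≤ a) (hb : 0 ≤ b)
    (hvp : ∀ᵐ s ∂volume.restrict (Icc 0 S), ‖v s‖ ≤ a * ‖p s‖ + b) :
    ∀ t ∈ Icc 0 S, ‖p t‖ ≤ (‖p S‖ + b * S) * Real.exp (a * S) := by
  have hpc := (continuousOn_of_eq_add_integral hv hp).norm
  have hint : ∀ t ∈ Icc 0 S, ‖p t‖ ≤ (‖p S‖ + b * S) + a * ∫ σ in t..S, ‖p σ‖ := by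
    intro t ht
    have hS : S ∈ Icc 0 S := ⟨ht.1.trans ht.2, le_rfl⟩
    have hpint : IntervalIntegrable (fun σ => ‖p σ‖) volume t S :=
      (hpc.mono (uIcc_subset_Icc ht hS)).intervalIntegrable
    have hvint : ‖∫ σ in t..S, v σ‖ ≤ ∫ σ in t..S, (a * ‖p σ‖ + b) := by
      refine intervalIntegral.norm_integral_le_of_norm_le ht.2 ?_ ((hpint.const_mul a).add
        intervalIntegrable_const)
      filter_upwards [(ae_restrict_iff' measurableSet_Icc).1 hvp] with s hs hsI
      exact hs ⟨ht.1.trans hsI.1.le, hsI.2⟩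
    rw [intervalIntegral.integral_add (hpint.const_mul a) intervalIntegrable_const,
      intervalIntegral.integral_const_mul, intervalIntegral.integral_const, smul_eq_mul] at hvint
    calc ‖p t‖ ≤ ‖p S‖ + ‖p S - p t‖ := norm_le_norm_add_norm_sub (p S) (p t)
      _ ≤ (‖p S‖ + b * S) + a * ∫ σ in t..S, ‖p σ‖ := by
        rw [sub_eq_integral_of_eq_add_integral hv hp hS ht]
        nlinarith [ht.1]
  intro t ht
  refine (le_mul_exp_of_le_add_mul_integral_right hpc ha hint t ht).trans ?_
  have hS : 0 ≤ S := ht.1.trans ht.2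
  gcongr
  linarith [ht.1]

end Primitive

theorem EquicontinuousOn.exists_subseq_tendstoUniformlyOn {X E : Type*} [TopologicalSpace X]
    [MetricSpace E] {q : ℕ → X → E} {s : Set X} (hs : IsCompact s) (hq : EquicontinuousOn q s)
    {T : Set E} (hT : IsCompact T) (hqT : ∀ k, MapsTo (q k) s T) :
    ∃ φ : ℕ → ℕ, StrictMono φ ∧ ∃ p : X → E,
      TendstoUniformlyOn (fun k => q (φ k)) p atTop s := by
  have : CompactSpace s := isCompact_iff_compactSpace.1 hs
  have hq' : Equicontinuous (s.domRestrict ∘ q) := (equicontinuous_restrict_iff q).2 hq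
  set f : ℕ → BoundedContinuousFunction s E := fun k =>
    BoundedContinuousFunction.mkOfCompact ⟨s.domRestrict (q k), hq'.continuous k⟩
  have hf : IsCompact (closure (range f)) :=
    BoundedContinuousFunction.arzela_ascoli T hT _ (by rintro _ x ⟨k, rfl⟩; exact hqT k x.2)
      ((equicontinuous_iff_range.1 hq').comp fun g : range f =>
        ⟨g.1, g.2.imp fun k hk => by rw [← hk]; rfl⟩)
  obtain ⟨g, -, φ, hφ, hfg⟩ := hf.tendsto_subseq fun k => subset_closure (mem_range_self k)
  refine ⟨φ, hφ, Function.extend Subtype.val g (q 0), ?_⟩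
  rw [tendstoUniformlyOn_iff_tendstoUniformly_comp_coe,
    Function.extend_comp Subtype.val_injective g (q 0)]
  exact BoundedContinuousFunction.tendsto_iff_tendstoUniformly.1 hfg

section Hilbert

variable {H : Type*} [NormedAddCommGroup H] [InnerProductSpace ℝ H] [CompleteSpace H]

theorem nonempty_iInter_of_antitone_of_convex {D : ℕ → Set H} (hD : Antitone D)
    (hne : ∀ m, (D m).Nonempty) (hclosed : ∀ m, IsClosed (D m)) (hconv : ∀ m, Convex ℝ (D m))
    (hbdd : Bornology.IsBounded (D 0)) : (⋂ m, D m).Nonempty := by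
  choose v hvD hvmin using fun m =>
    exists_norm_eq_iInf_of_complete_convex (hne m) (hclosed m).isComplete (hconv m) 0
  -- `v m` minimizes the norm on `D m`, so `‖v j‖² ≤ ⟪v j, x⟫` for `x ∈ D m ⊆ D j`.
  have hdist : ∀ {j m}, j ≤ m → dist (v j) (v m) ^ 2 ≤ ‖v m‖ ^ 2 - ‖v j‖ ^ 2 := by
    intro j m hjm
    have h := (norm_eq_iInf_iff_real_inner_le_zero (hconv j) (hvD j)).1 (hvmin j) (v m)
      (hD hjm (hvD m))
    rw [zero_sub, inner_neg_left, inner_sub_right, real_inner_self_eq_norm_sq] at h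
    rw [dist_eq_norm, norm_sub_sq_real]
    linarith
  obtain ⟨C, hC⟩ := hbdd.exists_norm_le
  have hmono : Monotone fun m => ‖v m‖ ^ 2 := fun j m hjm =>
    sub_nonneg.1 ((sq_nonneg _).trans (hdist hjm))
  have hbddAbove : BddAbove (range fun m => ‖v m‖ ^ 2) :=
    ⟨C ^ 2, forall_mem_range.2 fun m =>
      pow_le_pow_left₀ (norm_nonneg _) (hC _ (hD (Nat.zero_le m) (hvD m))) 2⟩
  set l := ⨆ m, ‖v m‖ ^ 2
  have hcauchy : CauchySeq v := by
    refine cauchySeq_of_le_tendsto_0' (fun j => √(l - ‖v j‖ ^ 2)) (fun j m hjm => ?_) ?_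
    · exact Real.le_sqrt_of_sq_le ((hdist hjm).trans (by linarith [le_ciSup hbddAbove m]))
    · have := ((tendsto_atTop_ciSup hmono hbddAbove).const_sub l).sqrt
      rwa [sub_self, Real.sqrt_zero] at this
  obtain ⟨x, hx⟩ := cauchySeq_tendsto_of_complete hcauchy
  exact ⟨x, mem_iInter.2 fun m => (hclosed m).mem_of_tendsto hx
    ((eventually_ge_atTop m).mono fun j hj => hD hj (hvD j))⟩

theorem exists_mem_of_eventually_mem_of_convex {u : ℕ → H} (hu : Bornology.IsBounded (range u)) :
    ∃ v, ∀ K : Set H, IsClosed K → Convex ℝ K → (∀ᶠ k in atTop, u k ∈ K) → v ∈ K := by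
  set D : ℕ → Set H := fun m => closure (convexHull ℝ (u '' Ici m))
  have hD : Antitone D := fun j m hjm =>
    closure_mono (convexHull_mono (image_mono (Ici_subset_Ici.2 hjm)))
  have hbdd : Bornology.IsBounded (D 0) :=
    (isBounded_convexHull.2 (hu.subset (image_subset_range _ _))).closure
  obtain ⟨v, hv⟩ := nonempty_iInter_of_antitone_of_convex hD
    (fun m => ⟨u m, subset_closure (subset_convexHull ℝ _ (mem_image_of_mem u self_mem_Ici))⟩)
    (fun m => isClosed_closure) (fun m => (convex_convexHull ℝ _).closure) hbdd
  refine ⟨v, fun K hK hKc huK => ?_⟩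
  obtain ⟨m, hm⟩ := eventually_atTop.1 huK
  exact closure_minimal (convexHull_min (image_subset_iff.2 hm) hKc) hK (mem_iInter.1 hv m)

end Hilbert

theorem ContinuousLinearMap.map_eq_of_tendsto_of_convex {H F : Type*} [NormedAddCommGroup H]
    [NormedSpace ℝ H] [NormedAddCommGroup F] [NormedSpace ℝ F] {u : ℕ → H} {v : H}
    (hv : ∀ K : Set H, IsClosed K → Convex ℝ K → (∀ᶠ k in atTop, u k ∈ K) → v ∈ K)
    (ℓ : H →L[ℝ] F) {y : F} (hy : Tendsto (fun k => ℓ (u k)) atTop (𝓝 y)) : ℓ v = y := by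
  refine eq_of_forall_dist_le fun δ hδ => hv _ (Metric.isClosed_closedBall.preimage ℓ.continuous)
    ((convex_closedBall y δ).linear_preimage ℓ.toLinearMap) ?_
  exact hy.eventually (Metric.closedBall_mem_nhds y hδ)

namespace MeasureTheory.Lp

variable {α E : Type*} [MeasurableSpace α] {μ : Measure α} [NormedAddCommGroup E]
  {p : ENNReal} {T : α → Set E}

theorem isClosed_setOf_ae_mem [Fact (1 ≤ p)] (hT : ∀ s, IsClosed (T s)) :
    IsClosed {f : Lp E p μ | ∀ᵐ s ∂μ, f s ∈ T s} := by
  refine IsSeqClosed.isClosed fun f g hf hfg => ?_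
  obtain ⟨ns, -, hns⟩ := (tendstoInMeasure_of_tendsto_Lp hfg).exists_seq_tendsto_ae
  filter_upwards [hns, ae_all_iff.2 hf] with s hs hfs
  exact (hT s).mem_of_tendsto hs (Eventually.of_forall fun i => hfs (ns i))

theorem convex_setOf_ae_mem [NormedSpace ℝ E] (hT : ∀ᵐ s ∂μ, Convex ℝ (T s)) :
    Convex ℝ {f : Lp E p μ | ∀ᵐ s ∂μ, f s ∈ T s} := by
  intro f hf g hg a b ha hb hab
  filter_upwards [hT, hf, hg, Lp.coeFn_add (a • f) (b • g), Lp.coeFn_smul a f,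
    Lp.coeFn_smul b g] with s hTs hfs hgs hadd hf' hg'
  rw [hadd, Pi.add_apply, hf', hg']
  exact hTs hfs hgs ha hb hab

end MeasureTheory.Lp

theorem exists_integrable_ae_mem_of_tendsto {α E : Type*} [MeasurableSpace α] {μ : Measure α}
    [IsFiniteMeasure μ] [NormedAddCommGroup E] [InnerProductSpace ℝ E] [CompleteSpace E]
    {w : ℕ → α → E} {L : ℝ} (hw_meas : ∀ k, AEStronglyMeasurable (w k) μ)
    (hw_bd : ∀ k, ∀ᵐ s ∂μ, ‖w k s‖ ≤ L) {K : α → Set E} (hK_closed : ∀ᵐ s ∂μ, IsClosed (K s))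
    (hK_conv : ∀ᵐ s ∂μ, Convex ℝ (K s))
    (hwK : ∀ δ > 0, ∀ᶠ k in atTop, ∀ᵐ s ∂μ, ∃ y ∈ K s, dist (w k s) y ≤ δ) :
    ∃ v : α → E, Integrable v μ ∧ (∀ᵐ s ∂μ, v s ∈ K s) ∧
      ∀ A, MeasurableSet A → ∀ y, Tendsto (fun k => ∫ s in A, w k s ∂μ) atTop (𝓝 y) →
        ∫ s in A, v s ∂μ = y := by
  have hL : ∀ k, ∀ᵐ s ∂μ, ‖w k s‖ ≤ max L 0 := fun k =>
    (hw_bd k).mono fun s hs => hs.trans (le_max_left _ _)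
  have hmem : ∀ k, MemLp (w k) 2 μ := fun k => MemLp.of_bound (hw_meas k) _ (hw_bd k)
  set u : ℕ → Lp E 2 μ := fun k => (hmem k).toLp
  have hu : Bornology.IsBounded (range u) := by
    refine isBounded_iff_forall_norm_le.2 ⟨_, forall_mem_range.2 fun k =>
      Lp.norm_le_of_ae_bound (le_max_right L 0) ?_⟩
    filter_upwards [(hmem k).coeFn_toLp, hL k] with s hs hsL
    rwa [hs]
  obtain ⟨V, hV⟩ := exists_mem_of_eventually_mem_of_convex hu
  refine ⟨V, (Lp.memLp V).integrable one_le_two, ?_, fun A hA y hy => ?_⟩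
  · have hthick : ∀ j : ℕ, ∀ᵐ s ∂μ, V s ∈ cthickening (1 / ((j : ℝ) + 1)) (K s) := by
      intro j
      refine hV _ (Lp.isClosed_setOf_ae_mem fun s => isClosed_cthickening)
        (Lp.convex_setOf_ae_mem (hK_conv.mono fun s hs => hs.cthickening _)) ?_
      filter_upwards [hwK (1 / ((j : ℝ) + 1)) Nat.one_div_pos_of_nat] with k hk
      filter_upwards [hk, (hmem k).coeFn_toLp] with s ⟨y, hy, hdist⟩ hs
      rw [hs]
      exact mem_cthickening_of_dist_le _ y _ _ hy hdist
    have hδ : ∀ ε > 0, (range (fun j : ℕ => 1 / ((j : ℝ) + 1)) ∩ Ioc 0 ε).Nonempty := by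
      intro ε hε
      obtain ⟨j, hj⟩ := exists_nat_one_div_lt hε
      exact ⟨_, mem_range_self j, Nat.one_div_pos_of_nat, hj.le⟩
    filter_upwards [ae_all_iff.2 hthick, hK_closed] with s hs hKs
    rw [← hKs.closure_eq, closure_eq_iInter_cthickening' _ _ hδ]
    simpa using hs
  · refine ext_inner_left ℝ fun c => ?_
    rw [← L2.inner_indicatorConstLp_eq_inner_setIntegral ℝ hA (measure_ne_top μ A)]
    refine (innerSL ℝ _).map_eq_of_tendsto_of_convex hV ?_
    refine (tendsto_const_nhds.inner hy).congr fun k => ?_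
    rw [innerSL_apply_apply, L2.inner_indicatorConstLp_eq_inner_setIntegral,
      integral_congr_ae (ae_restrict_of_ae (hmem k).coeFn_toLp)]

theorem exists_integrable_ae_mem_of_tendsto_of_finiteDimensional {α F : Type*}
    [MeasurableSpace α] {μ : Measure α} [IsFiniteMeasure μ] [NormedAddCommGroup F]
    [NormedSpace ℝ F] [FiniteDimensional ℝ F]
    {w : ℕ → α → F} {L : ℝ} (hw_meas : ∀ k, AEStronglyMeasurable (w k) μ)
    (hw_bd : ∀ k, ∀ᵐ s ∂μ, ‖w k s‖ ≤ L) {K : α → Set F} (hK_closed : ∀ᵐ s ∂μ, IsClosed (K s))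
    (hK_conv : ∀ᵐ s ∂μ, Convex ℝ (K s))
    (hwK : ∀ δ > 0, ∀ᶠ k in atTop, ∀ᵐ s ∂μ, ∃ y ∈ K s, dist (w k s) y ≤ δ) :
    ∃ v : α → F, Integrable v μ ∧ (∀ᵐ s ∂μ, v s ∈ K s) ∧
      ∀ A, MeasurableSet A → ∀ y, Tendsto (fun k => ∫ s in A, w k s ∂μ) atTop (𝓝 y) →
        ∫ s in A, v s ∂μ = y := by
  let e : F ≃L[ℝ] EuclideanSpace ℝ (Fin (Module.finrank ℝ F)) := toEuclidean
  set c := ‖e.toContinuousLinearMap‖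
  have hc : 0 < c + 1 := by positivity
  have he : ∀ x y, dist (e x) (e y) ≤ c * dist x y := fun x y => by
    simpa using e.toContinuousLinearMap.lipschitz.dist_le_mul x y
  obtain ⟨v, hv_int, hv_mem, hv_eq⟩ := exists_integrable_ae_mem_of_tendsto
    (w := fun k s => e (w k s)) (K := fun s => e.symm ⁻¹' K s)
    (fun k => e.continuous.comp_aestronglyMeasurable (hw_meas k))
    (fun k => (hw_bd k).mono fun s hs => (e.toContinuousLinearMap.le_opNorm _).trans
      (mul_le_mul_of_nonneg_left hs (norm_nonneg _)))
    (hK_closed.mono fun s hs => hs.preimage e.symm.continuous)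
    (hK_conv.mono fun s hs => hs.linear_preimage e.symm.toContinuousLinearMap.toLinearMap)
    (fun δ hδ => by
      filter_upwards [hwK (δ / (c + 1)) (div_pos hδ hc)] with k hk
      filter_upwards [hk] with s ⟨y, hy, hdist⟩
      refine ⟨e y, by simpa using hy, (he _ _).trans ?_⟩
      calc c * dist (w k s) y ≤ (c + 1) * (δ / (c + 1)) := by gcongr; linarith
        _ = δ := mul_div_cancel₀ δ hc.ne')
  refine ⟨fun s => e.symm (v s), e.symm.toContinuousLinearMap.integrable_comp hv_int,
    hv_mem, fun A hA y hy => ?_⟩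
  rw [e.symm.integral_comp_comm, hv_eq A hA (e y), e.symm_apply_apply]
  simp only [e.integral_comp_comm]
  exact (e.continuous.tendsto y).comp hy

theorem norm_vecMul_le {m n : Type*} [Fintype m] [Fintype n] {R : ℝ} (hR : 0 ≤ R) (x : m → ℝ)
    (M : Matrix m n ℝ) (hM : ∀ i j, |M i j| ≤ R) : ‖x ᵥ* M‖ ≤ Fintype.card m * R * ‖x‖ := by
  refine (pi_norm_le_iff_of_nonneg (by positivity)).2 fun j => ?_
  calc ‖(x ᵥ* M) j‖ = |∑ i, x i * M i j| := rfl
    _ ≤ ∑ i, |x i| * |M i j| := by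
      simpa only [abs_mul] using Finset.abs_sum_le_sum_abs (fun i => x i * M i j) Finset.univ
    _ ≤ ∑ _i : m, ‖x‖ * R := by
      gcongr with i
      · exact norm_le_pi_norm x i
      · exact hM i j
    _ = Fintype.card m * R * ‖x‖ := by
      simp only [Finset.sum_const, Finset.card_univ, nsmul_eq_mul]
      ring

theorem IsCompact.vecMul_image_add {m n : Type*} [Fintype m] {B : Set (Matrix m n ℝ)}
    {C : Set (n → ℝ)} (hB : IsCompact B) (hC : IsCompact C) (x : m → ℝ) :
    IsCompact ((x ᵥ* ·) '' B + C) :=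
  (hB.image (continuous_const.matrix_vecMul continuous_id)).add hC

theorem Convex.vecMul_image_add {m n : Type*} [Fintype m] {B : Set (Matrix m n ℝ)}
    {C : Set (n → ℝ)} (hB : Convex ℝ B) (hC : Convex ℝ C) (x : m → ℝ) :
    Convex ℝ ((x ᵥ* ·) '' B + C) :=
  (hB.is_linear_image ⟨fun M N => vecMul_add M N x, fun c M => vecMul_smul x c M⟩).add hC

section Inclusion

variable {m : Type*} [Fintype m] {R : ℝ}

theorem ae_norm_le_of_mem_vecMul_add {α : Type*} [MeasurableSpace α] {μ : Measure α}
    {T : Set α} {B : α → Set (Matrix m m ℝ)} {C : α → Set (m → ℝ)} (hμT : ∀ᵐ s ∂μ, s ∈ T)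
    (hR : 0 ≤ R) (hB : ∀ s ∈ T, ∀ M ∈ B s, ∀ i j, |M i j| ≤ R)
    (hC : ∀ s ∈ T, ∀ c ∈ C s, ‖c‖ ≤ R)
    {p v : α → m → ℝ} (hv : ∀ᵐ s ∂μ, ∃ M ∈ B s, ∃ c ∈ C s, v s = p s ᵥ* M + c) :
    ∀ᵐ s ∂μ, ‖v s‖ ≤ Fintype.card m * R * ‖p s‖ + R := by
  filter_upwards [hv, hμT] with s ⟨M, hM, c, hc, hvs⟩ hs
  rw [hvs]
  exact (norm_add_le _ _).trans (add_le_add (norm_vecMul_le hR (p s) M (hB s hs M hM))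
    (hC s hs c hc))

theorem eventually_ae_exists_mem_vecMul_add_dist_le {α : Type*} [MeasurableSpace α]
    {μ : Measure α} {T : Set α} {B : α → Set (Matrix m m ℝ)} {C : α → Set (m → ℝ)}
    (hμT : ∀ᵐ s ∂μ, s ∈ T) (hR : 0 ≤ R)
    (hB : ∀ s ∈ T, ∀ M ∈ B s, ∀ i j, |M i j| ≤ R) {q w : ℕ → α → m → ℝ} {p : α → m → ℝ}
    (hq : TendstoUniformlyOn q p atTop T)
    (hw : ∀ k, ∀ᵐ s ∂μ, ∃ M ∈ B s, ∃ c ∈ C s, w k s = q k s ᵥ* M + c) :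
    ∀ δ > 0, ∀ᶠ k in atTop, ∀ᵐ s ∂μ, ∃ y ∈ (p s ᵥ* ·) '' B s + C s, dist (w k s) y ≤ δ := by
  intro δ hδ
  set N : ℝ := Fintype.card m * R
  have hN : 0 < N + 1 := by positivity
  filter_upwards [Metric.tendstoUniformlyOn_iff.1 hq (δ / (N + 1)) (div_pos hδ hN)] with k hk
  filter_upwards [hw k, hμT] with s ⟨M, hM, c, hc, hws⟩ hs
  refine ⟨p s ᵥ* M + c, add_mem_add (mem_image_of_mem _ hM) hc, ?_⟩
  calc dist (w k s) (p s ᵥ* M + c) = ‖(q k s - p s) ᵥ* M‖ := by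
        rw [hws, dist_add_right, dist_eq_norm, Matrix.sub_vecMul]
    _ ≤ N * ‖q k s - p s‖ := norm_vecMul_le hR _ M (hB s hs M hM)
    _ ≤ (N + 1) * (δ / (N + 1)) := by
        gcongr
        · linarith
        · rw [← dist_eq_norm, dist_comm]; exact (hk s hs).le
    _ = δ := mul_div_cancel₀ δ hN.ne'

theorem norm_le_and_ae_norm_le_of_mem_vecMul_add {S ρ : ℝ} (hR : 0 ≤ R)
    {B : ℝ → Set (Matrix m m ℝ)} {C : ℝ → Set (m → ℝ)}
    (hB : ∀ s ∈ Icc 0 S, ∀ M ∈ B s, ∀ i j, |M i j| ≤ R)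
    (hC : ∀ s ∈ Icc 0 S, ∀ c ∈ C s, ‖c‖ ≤ R) {p v : ℝ → m → ℝ}
    (hv : IntervalIntegrable v volume 0 S)
    (hv_mem : ∀ᵐ s ∂volume.restrict (Icc 0 S), ∃ M ∈ B s, ∃ c ∈ C s, v s = p s ᵥ* M + c)
    (hp : ∀ t ∈ Icc 0 S, p t = p 0 + ∫ σ in 0..t, v σ) (hpS : ‖p S‖ ≤ ρ) :
    (∀ t ∈ Icc 0 S, ‖p t‖ ≤ (ρ + R * S) * Real.exp (Fintype.card m * R * S)) ∧
      ∀ᵐ s ∂volume.restrict (Icc 0 S),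
        ‖v s‖ ≤ Fintype.card m * R * ((ρ + R * S) * Real.exp (Fintype.card m * R * S)) + R := by
  have hvp := ae_norm_le_of_mem_vecMul_add (ae_restrict_mem measurableSet_Icc) hR hB hC hv_mem
  have hp_bd : ∀ t ∈ Icc 0 S, ‖p t‖ ≤ (ρ + R * S) * Real.exp (Fintype.card m * R * S) :=
    fun t ht => (norm_le_of_eq_add_integral_of_norm_le hv hp (by positivity) hR hvp t ht).trans
      (by have := ht.1.trans ht.2; gcongr)
  refine ⟨hp_bd, ?_⟩
  filter_upwards [hvp, ae_restrict_mem measurableSet_Icc] with s hs hsI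
  exact hs.trans (by gcongr; exact hp_bd s hsI)

end Inclusion

theorem intervalIntegral_eq_setIntegral_Ioc_restrict {E : Type*} [NormedAddCommGroup E]
    [NormedSpace ℝ E] (f : ℝ → E) {a b t : ℝ} (ht : t ∈ Icc a b) :
    ∫ σ in a..t, f σ = ∫ σ in Ioc a t, f σ ∂volume.restrict (Icc a b) := by
  rw [intervalIntegral.integral_of_le ht.1, Measure.restrict_restrict measurableSet_Ioc,
    inter_eq_left.2 (Ioc_subset_Icc_self.trans (Icc_subset_Icc_right ht.2))]

theorem limit_of_solutions_of_linear_inclusion_general {n : ℕ} {S R : ℝ} (hS : 0 < S)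
    (hR : 0 < R)
    {B : ℝ → Set (Fin n → Fin n → ℝ)} {C : ℝ → Set (Fin n → ℝ)}
    (hB : ∀ s ∈ Set.Icc (0:ℝ) S, IsCompact (B s) ∧ Convex ℝ (B s) ∧ (B s).Nonempty
      ∧ ∀ M ∈ B s, ∀ i j, |M i j| ≤ R)
    (hC : ∀ s ∈ Set.Icc (0:ℝ) S, IsCompact (C s) ∧ Convex ℝ (C s) ∧ (C s).Nonempty
      ∧ ∀ c ∈ C s, ‖c‖ ≤ R)
    {pseq : ℕ → ℝ → Fin n → ℝ}
    (hsol : ∀ k, IsSolInclusion S B C (pseq k))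
    (hbd : ∀ k, ‖pseq k S‖ ≤ 1) :
    ∃ φ : ℕ → ℕ, StrictMono φ ∧ ∃ p : ℝ → Fin n → ℝ,
      TendstoUniformlyOn (fun k => pseq (φ k)) p atTop (Set.Icc 0 S) ∧
      IsSolInclusion S B C p := by
  choose v hv_int hv_mem hp_eq using hsol
  have hμ : ∀ᵐ s ∂volume.restrict (Icc 0 S), s ∈ Icc 0 S := ae_restrict_mem measurableSet_Icc
  have hBR : ∀ s ∈ Icc 0 S, ∀ M ∈ B s, ∀ i j, |M i j| ≤ R := fun s hs => (hB s hs).2.2.2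
  obtain ⟨hp_bd, hv_bd⟩ := forall_and.1 fun k => norm_le_and_ae_norm_le_of_mem_vecMul_add hR.le
    hBR (fun s hs => (hC s hs).2.2.2) (hv_int k) (hv_mem k) (hp_eq k) (hbd k)
  obtain ⟨φ, hφ, p, hp⟩ := EquicontinuousOn.exists_subseq_tendstoUniformlyOn isCompact_Icc
    (LipschitzOnWith.uniformEquicontinuousOn _ ⟨_, by positivity⟩ fun k =>
      lipschitzOnWith_of_eq_add_integral (hv_int k) (hp_eq k) (hv_bd k)).equicontinuousOn
    (isCompact_closedBall 0 _) fun k t ht => mem_closedBall_zero_iff.2 (hp_bd k t ht)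
  obtain ⟨w, hw_int, hw_mem, hw_eq⟩ := exists_integrable_ae_mem_of_tendsto_of_finiteDimensional
    (K := fun s => (p s ᵥ* ·) '' B s + C s)
    (fun k => ((intervalIntegrable_iff_integrableOn_Icc_of_le hS.le).1
      (hv_int (φ k))).aestronglyMeasurable) (fun k => hv_bd (φ k))
    (hμ.mono fun s hs => ((hB s hs).1.vecMul_image_add (hC s hs).1 (p s)).isClosed)
    (hμ.mono fun s hs => (hB s hs).2.1.vecMul_image_add (hC s hs).2.1 (p s))
    (eventually_ae_exists_mem_vecMul_add_dist_le hμ hR.le hBR hp fun k => hv_mem (φ k))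
  refine ⟨φ, hφ, p, hp, w, (intervalIntegrable_iff_integrableOn_Icc_of_le hS.le).2 hw_int, ?_,
    fun t ht => ?_⟩
  · filter_upwards [hw_mem] with s ⟨_, ⟨M, hM, rfl⟩, c, hc, hws⟩
    exact ⟨M, hM, c, hc, hws.symm⟩
  · have h0 : (0 : ℝ) ∈ Icc 0 S := left_mem_Icc.2 hS.le
    rw [intervalIntegral_eq_setIntegral_Ioc_restrict w ht, hw_eq _ measurableSet_Ioc (p t - p 0)]
    · abel
    · refine ((hp.tendsto_at ht).sub (hp.tendsto_at h0)).congr fun k => ?_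
      rw [← intervalIntegral_eq_setIntegral_Ioc_restrict _ ht,
        ← sub_eq_integral_of_eq_add_integral (hv_int (φ k)) (hp_eq (φ k)) ht h0]

theorem limit_of_solutions_of_linear_inclusion {n : ℕ} {S R : ℝ} (hS : 0 < S)
    (hR : 0 < R)
    {B : ℝ → Set (Fin n → Fin n → ℝ)} {C : ℝ → Set (Fin n → ℝ)}
    (hBmeas : MeasurableSet {q : ℝ × (Fin n → Fin n → ℝ) | q.2 ∈ B q.1})
    (hCmeas : MeasurableSet {q : ℝ × (Fin n → ℝ) | q.2 ∈ C q.1})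
    (hB : ∀ s ∈ Set.Icc (0:ℝ) S, IsCompact (B s) ∧ Convex ℝ (B s) ∧ (B s).Nonempty
      ∧ ∀ M ∈ B s, ∀ i j, |M i j| ≤ R)
    (hC : ∀ s ∈ Set.Icc (0:ℝ) S, IsCompact (C s) ∧ Convex ℝ (C s) ∧ (C s).Nonempty
      ∧ ∀ c ∈ C s, ‖c‖ ≤ R)
    {pseq : ℕ → ℝ → Fin n → ℝ}
    (hsol : ∀ k, IsSolInclusion S B C (pseq k))
    (hbd : ∀ k, ‖pseq k S‖ ≤ 1) :
    ∃ φ : ℕ → ℕ, StrictMono φ ∧ ∃ p : ℝ → Fin n → ℝ,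
      TendstoUniformlyOn (fun k => pseq (φ k)) p atTop (Set.Icc 0 S) ∧
      IsSolInclusion S B C p :=
  limit_of_solutions_of_linear_inclusion_general hS hR hB hC hsol hbd
end
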